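/- Let α ∈ (0,1), Θ, θ⁰, μ ∈ ℝ and σ > 0, and let P be a Borel probability measure on ℝ with finite second moment, mean μ and variance σ². Then ⨅_{β ∈ ℝ} (β + (1-α)⁻¹ · ∫ max(Θx + θ⁰ - β, 0) dP(x)) ≤ Θμ + θ⁰ + |Θ|·σ·Real.sqrt (α/(1-α)). -/

import Mathlib

/-!
Write `m` and `s²` for the mean and variance of the loss. Since `max y 0 = (y + |y|) / 2` and
`E|Y| ≤ √(E Y²)`, the tail expectation at level `β` is at most `(m - β + √(s² + (m - β)²)) / 2`.
Minimising `β + (1 - α)⁻¹` times this bound over `β` gives `m + s √(α / (1 - α))`; with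
`r = √(α / (1 - α))` the minimiser is `β = m + s (r² - 1) / (2r)`, at which the square root equals
`s (r² + 1) / (2r)`, and `(1 - α)⁻¹ = 1 + r²`.
-/

open MeasureTheory ProbabilityTheory

noncomputable def cvar {Ω : Type*} [MeasurableSpace Ω] (α : ℝ) (f : Ω → ℝ) (μ : Measure Ω) : ℝ :=
  ⨅ β : ℝ, β + (1 - α)⁻¹ * ∫ x, max (f x - β) 0 ∂μ

section

variable {Ω : Type*} [MeasurableSpace Ω] {μ : Measure Ω} [IsProbabilityMeasure μ] {f : Ω → ℝ}

lemma integral_abs_le_of_integral_sq_le (hf : MemLp f 2 μ) {k : ℝ} (hk : 0 ≤ k)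
    (hfk : ∫ x, f x ^ 2 ∂μ ≤ k ^ 2) : ∫ x, |f x| ∂μ ≤ k := by
  have hvar := variance_eq_sub (X := fun x => |f x|) hf.abs
  simp only [Pi.pow_apply, sq_abs] at hvar
  have hvar_nonneg := variance_nonneg (fun x => |f x|) μ
  rw [← pow_le_pow_iff_left₀ (integral_nonneg fun _ => abs_nonneg _) hk two_ne_zero]
  linarith

lemma integral_max_zero_le_of_integral_sq_le (hf : MemLp f 2 μ) {k : ℝ} (hk : 0 ≤ k)
    (hfk : ∫ x, f x ^ 2 ∂μ ≤ k ^ 2) : ∫ x, max (f x) 0 ∂μ ≤ (μ[f] + k) / 2 := by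
  have hmax : ∀ y : ℝ, max y 0 = (y + |y|) / 2 := fun y => by
    rcases le_total y 0 with h | h
    · rw [max_eq_right h, abs_of_nonpos h]; ring
    · rw [max_eq_left h, abs_of_nonneg h]; ring
  have hint := hf.integrable one_le_two
  simp_rw [hmax]
  rw [integral_div, integral_add hint hint.abs]
  gcongr
  exact integral_abs_le_of_integral_sq_le hf hk hfk

lemma integral_sub_const_sq (hf : MemLp f 2 μ) (c : ℝ) :
    ∫ x, (f x - c) ^ 2 ∂μ = Var[f; μ] + (μ[f] - c) ^ 2 := by
  have hfc : MemLp (fun x => f x - c) 2 μ := hf.sub (memLp_const c)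
  rw [← variance_sub_const hf.aestronglyMeasurable c, variance_eq_sub hfc,
    integral_sub (hf.integrable one_le_two) (integrable_const c)]
  simp

lemma integral_le_add_inv_mul_integral_max_sub (hf : Integrable f μ) {α : ℝ} (hα0 : 0 ≤ α)
    (hα1 : α < 1) (β : ℝ) : μ[f] ≤ β + (1 - α)⁻¹ * ∫ x, max (f x - β) 0 ∂μ := by
  have hpos : 0 ≤ ∫ x, max (f x - β) 0 ∂μ := integral_nonneg fun _ => le_max_right _ _
  have hlin : μ[f] - β ≤ ∫ x, max (f x - β) 0 ∂μ := by
    calc μ[f] - β = ∫ x, (f x - β) ∂μ := by simp [integral_sub hf (integrable_const β)]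
      _ ≤ _ := integral_mono (hf.sub (integrable_const β)) (hf.sub (integrable_const β)).pos_part
          fun _ => le_max_left _ _
  have hinv : 1 ≤ (1 - α)⁻¹ := one_le_inv₀ (by linarith) |>.mpr (by linarith)
  nlinarith

lemma cvar_le_integral_add_sqrt_variance_mul (hf : MemLp f 2 μ) {α : ℝ} (hα : α ∈ Set.Ioo 0 1) :
    cvar α f μ ≤ μ[f] + √Var[f; μ] * √(α / (1 - α)) := by
  obtain ⟨hα0, hα1⟩ := hα
  set r := √(α / (1 - α))
  set s := √Var[f; μ]
  have hr : 0 < r := Real.sqrt_pos.2 (div_pos hα0 (sub_pos.2 hα1))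
  have hinv : (1 - α)⁻¹ = 1 + r ^ 2 := by
    rw [Real.sq_sqrt (div_nonneg hα0.le (sub_pos.2 hα1).le)]
    field_simp [(sub_pos.2 hα1).ne']
    ring
  set t := s * (r ^ 2 - 1) / (2 * r) with ht
  set k := s * (r ^ 2 + 1) / (2 * r) with hk_def
  have hk : 0 ≤ k := by positivity
  have hs2 : s ^ 2 = Var[f; μ] := Real.sq_sqrt (variance_nonneg f μ)
  have hsq : ∫ x, (f x - (μ[f] + t)) ^ 2 ∂μ ≤ k ^ 2 := by
    rw [integral_sub_const_sq hf, ← hs2]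
    refine le_of_eq ?_
    rw [ht, hk_def]
    field_simp
    ring
  have hmax := integral_max_zero_le_of_integral_sq_le (f := fun x => f x - (μ[f] + t))
    (hf.sub (memLp_const _)) hk hsq
  rw [integral_sub (hf.integrable one_le_two) (integrable_const _)] at hmax
  have hbdd : BddBelow (Set.range fun β : ℝ => β + (1 - α)⁻¹ * ∫ x, max (f x - β) 0 ∂μ) :=
    ⟨μ[f], by
      rintro _ ⟨β, rfl⟩
      exact integral_le_add_inv_mul_integral_max_sub (hf.integrable one_le_two) hα0.le hα1 β⟩
  calc cvar α f μ ≤ (μ[f] + t) + (1 - α)⁻¹ * ∫ x, max (f x - (μ[f] + t)) 0 ∂μ :=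
        ciInf_le hbdd _
    _ ≤ (μ[f] + t) + (1 + r ^ 2) * ((k - t) / 2) := by
        rw [hinv]
        gcongr
        simpa [neg_add_eq_sub] using hmax
    _ = μ[f] + s * r := by
        rw [ht, hk_def]
        field_simp
        ring

end

theorem cvar_affine_upper_bound
    (α Θ θ0 μ σ : ℝ) (hα : α ∈ Set.Ioo (0 : ℝ) 1) (hσ : 0 < σ)
    (P : Measure ℝ) [IsProbabilityMeasure P] (h2 : MemLp id 2 P)
    (hmean : (∫ x, x ∂P) = μ) (hvar : (∫ x, (x - μ) ^ 2 ∂P) = σ ^ 2) :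
    (⨅ β : ℝ, (β + (1 - α)⁻¹ * ∫ x, max (Θ * x + θ0 - β) 0 ∂P)) ≤
      Θ * μ + θ0 + |Θ| * σ * Real.sqrt (α / (1 - α)) := by
  have hf : MemLp (fun x => Θ * x + θ0) 2 P := (h2.const_mul Θ).add (memLp_const θ0)
  have hint : Integrable (fun x : ℝ => x) P := h2.integrable one_le_two
  have hmean' : ∫ x, Θ * x + θ0 ∂P = Θ * μ + θ0 := by
    rw [integral_add (hint.const_mul Θ) (integrable_const θ0),
      integral_const_mul, hmean]
    simp
  have hvar' : Var[fun x => Θ * x + θ0; P] = (|Θ| * σ) ^ 2 := by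
    rw [variance_add_const (by fun_prop), variance_const_mul,
      variance_eq_integral measurable_id'.aemeasurable]
    simp [hmean, hvar, mul_pow]
  have h := cvar_le_integral_add_sqrt_variance_mul hf hα
  rwa [hmean', hvar', Real.sqrt_sq (by positivity)] at h
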